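/- arXiv:1110.0855 — 6 statements merged into one kernel-verified Lean document; each statement's English description precedes it below -/
import Mathlib

section
/- Let f : ℝⁿ × ℝ → ℝⁿ and c > 0 be such that for almost every t ≥ t₀ and all a, b ∈ ℝⁿ, ⟨f(a,t) − f(b,t), a − b⟩ ≤ −c‖a − b‖². Let x, y : [t₀, ∞) → ℝⁿ be two Caratheodory solutions of ż = f(z,t). Then for all t ≥ t₀, ‖x(t) − y(t)‖ ≤ e^{−c(t−t₀)} ‖x(t₀) − y(t₀)‖; in particular x(t) − y(t) → 0 exponentially as t → ∞. -/
/-!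
For two solutions, `w = x - y` is a primitive, `w t = w t₀ + ∫ g` with `⟪g, w⟫ ≤ -c ‖w‖²` a.e.
Primitives of integrable functions are absolutely continuous, hence so is
`τ ↦ exp (2 c τ) ‖w τ‖²`; its a.e. derivative `exp (2 c τ) (2 c ‖w‖² + 2 ⟪w, g⟫)` is
nonpositive, and an absolutely continuous function with a.e. nonpositive derivative is
nonincreasing (FTC for absolutely continuous functions).
-/

open scoped RealInnerProductSpace
open MeasureTheory

noncomputable section

/-- A Caratheodory solution of `ż = g(t, z)` on `[t₀, ∞)`: a (locally
absolutely) continuous function satisfying the integral equation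
`z t = z t₀ + ∫_{t₀}^t g(τ, z τ) dτ`. -/
def IsCaratheodorySol {E : Type*} [NormedAddCommGroup E] [NormedSpace ℝ E]
    (g : ℝ → E → E) (t₀ : ℝ) (z : ℝ → E) : Prop :=
  ContinuousOn z (Set.Ici t₀) ∧
  ∀ t, t₀ ≤ t →
    IntervalIntegrable (fun τ => g τ (z τ)) volume t₀ t ∧
    z t = z t₀ + ∫ τ in t₀..t, g τ (z τ)

open Set Filter Topology

namespace AbsolutelyContinuousOnInterval

theorem of_dist_le_mul {X Y : Type*} [PseudoMetricSpace X] [PseudoMetricSpace Y]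
    {f : ℝ → X} {G : ℝ → Y} {a b K : ℝ} (hG : AbsolutelyContinuousOnInterval G a b)
    (hfG : ∀ s ∈ uIcc a b, ∀ t ∈ uIcc a b, dist (f s) (f t) ≤ K * dist (G s) (G t)) :
    AbsolutelyContinuousOnInterval f a b := by
  unfold AbsolutelyContinuousOnInterval at hG ⊢
  have hKG := mul_zero K ▸ hG.const_mul K
  refine squeeze_zero' (Eventually.of_forall fun _ ↦ Finset.sum_nonneg fun _ _ ↦ dist_nonneg)
    ?_ hKG
  filter_upwards [eventually_inf_principal.mpr (Eventually.of_forall fun _ h ↦ h)]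
    with E hE
  rw [Finset.mul_sum]
  exact Finset.sum_le_sum fun i hi ↦ hfG _ (hE.1 i hi).1 _ (hE.1 i hi).2

theorem norm_sq {E : Type*} [NormedAddCommGroup E] [InnerProductSpace ℝ E] {f : ℝ → E}
    {a b : ℝ} (hf : AbsolutelyContinuousOnInterval f a b) :
    AbsolutelyContinuousOnInterval (fun x ↦ ‖f x‖ ^ 2) a b := by
  obtain ⟨C, hC⟩ := hf.exists_bound
  refine hf.of_dist_le_mul (K := 2 * C) fun s hs t ht ↦ ?_
  have hsum : ‖f s + f t‖ ≤ 2 * C := (norm_add_le _ _).trans (by linarith [hC s hs, hC t ht])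
  calc dist (‖f s‖ ^ 2) (‖f t‖ ^ 2) = |⟪f s + f t, f s - f t⟫| := by
        rw [Real.dist_eq, inner_add_left, inner_sub_right, inner_sub_right,
          real_inner_self_eq_norm_sq, real_inner_self_eq_norm_sq, real_inner_comm (f s) (f t),
          sub_add_sub_cancel]
    _ ≤ ‖f s + f t‖ * ‖f s - f t‖ := abs_real_inner_le_norm _ _
    _ ≤ 2 * C * dist (f s) (f t) := by
        rw [dist_eq_norm]; exact mul_le_mul_of_nonneg_right hsum (norm_nonneg _)

theorem le_of_ae_deriv_nonpos {f : ℝ → ℝ} {a b : ℝ} (hf : AbsolutelyContinuousOnInterval f a b)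
    (hab : a ≤ b) (hf' : ∀ᵐ x, x ∈ Icc a b → deriv f x ≤ 0) : f b ≤ f a := by
  have hint : 0 ≤ ∫ x in a..b, -deriv f x :=
    intervalIntegral.integral_nonneg_of_ae_restrict hab <|
      (ae_restrict_iff' measurableSet_Icc).2 <| hf'.mono fun x hx hmem ↦ neg_nonneg.2 (hx hmem)
  rw [intervalIntegral.integral_neg, hf.integral_deriv_eq_sub] at hint
  linarith

end AbsolutelyContinuousOnInterval

/-- Mathlib's `absolutelyContinuousOnInterval_intervalIntegral` only covers real integrands. -/
theorem IntervalIntegrable.absolutelyContinuousOnInterval_primitive {E : Type*}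
    [NormedAddCommGroup E] [NormedSpace ℝ E] {g : ℝ → E} {a b c : ℝ}
    (hg : IntervalIntegrable g volume a b) (hc : c ∈ uIcc a b) :
    AbsolutelyContinuousOnInterval (fun x ↦ ∫ τ in c..x, g τ) a b := by
  refine (hg.norm.absolutelyContinuousOnInterval_intervalIntegral hc).of_dist_le_mul
    (K := 1) fun s hs t ht ↦ ?_
  have hcs : IntervalIntegrable g volume c s := hg.mono_set (uIcc_subset_uIcc hc hs)
  have hct : IntervalIntegrable g volume c t := hg.mono_set (uIcc_subset_uIcc hc ht)
  rw [one_mul, dist_eq_norm, dist_eq_norm, intervalIntegral.integral_interval_sub_left hcs hct,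
    intervalIntegral.integral_interval_sub_left hcs.norm hct.norm, Real.norm_eq_abs]
  exact intervalIntegral.norm_integral_le_abs_integral_norm

theorem norm_le_exp_neg_mul_of_inner_le {E : Type*} [NormedAddCommGroup E]
    [InnerProductSpace ℝ E] [CompleteSpace E] {w g : ℝ → E} {a b c : ℝ} (hab : a ≤ b)
    (hg : IntervalIntegrable g volume a b) (hw : ∀ τ ∈ Icc a b, w τ = w a + ∫ s in a..τ, g s)
    (hdiss : ∀ᵐ τ, τ ∈ Icc a b → ⟪g τ, w τ⟫ ≤ -c * ‖w τ‖ ^ 2) :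
    ‖w b‖ ≤ Real.exp (-c * (b - a)) * ‖w a‖ := by
  set V : ℝ → E := fun τ ↦ w a + ∫ s in a..τ, g s
  have hV : AbsolutelyContinuousOnInterval V a b :=
    (LipschitzWith.const (w a)).lipschitzOnWith.absolutelyContinuousOnInterval.fun_add
      (hg.absolutelyContinuousOnInterval_primitive left_mem_uIcc)
  have hexp : AbsolutelyContinuousOnInterval (fun τ ↦ Real.exp (2 * c * τ)) a b :=
    ContDiffOn.absolutelyContinuousOnInterval (by fun_prop)
  have hderiv : ∀ᵐ τ, τ ∈ Icc a b → deriv (fun τ ↦ Real.exp (2 * c * τ) * ‖V τ‖ ^ 2) τ ≤ 0 := by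
    filter_upwards [hg.ae_hasDerivAt_integral, hdiss] with τ hprim hτ hmem
    have hVτ : HasDerivAt V (g τ) τ :=
      (hprim (uIcc_of_le hab ▸ hmem) a left_mem_uIcc).const_add (w a)
    have hexpτ : HasDerivAt (fun τ ↦ Real.exp (2 * c * τ)) (Real.exp (2 * c * τ) * (2 * c)) τ := by
      simpa using ((hasDerivAt_id τ).const_mul (2 * c)).exp
    rw [(hexpτ.fun_mul hVτ.norm_sq).deriv, real_inner_comm, show V τ = w τ from (hw τ hmem).symm]
    have hneg : ⟪g τ, w τ⟫ + c * ‖w τ‖ ^ 2 ≤ 0 := by linarith [hτ hmem]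
    nlinarith [mul_nonpos_of_nonneg_of_nonpos (Real.exp_pos (2 * c * τ)).le hneg]
  have hmono := (hexp.fun_mul hV.norm_sq).le_of_ae_deriv_nonpos hab hderiv
  simp only [V, ← hw b ⟨hab, le_rfl⟩, intervalIntegral.integral_same, add_zero] at hmono
  have hsq : ‖w b‖ ^ 2 ≤ (Real.exp (-c * (b - a)) * ‖w a‖) ^ 2 :=
    calc ‖w b‖ ^ 2 = Real.exp (-(2 * c * b)) * (Real.exp (2 * c * b) * ‖w b‖ ^ 2) := by
          rw [← mul_assoc, ← Real.exp_add, neg_add_cancel, Real.exp_zero, one_mul]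
      _ ≤ Real.exp (-(2 * c * b)) * (Real.exp (2 * c * a) * ‖w a‖ ^ 2) := by gcongr
      _ = (Real.exp (-c * (b - a)) * ‖w a‖) ^ 2 := by
          rw [← mul_assoc, ← Real.exp_add, mul_pow, ← Real.exp_nat_mul]
          congr 2
          push_cast
          ring
  exact (pow_le_pow_iff_left₀ (norm_nonneg _) (by positivity) two_ne_zero).1 hsq

theorem IsCaratheodorySol.sub_eq_add_integral {E : Type*} [NormedAddCommGroup E]
    [NormedSpace ℝ E] {g : ℝ → E → E} {t₀ t : ℝ} {x y : ℝ → E}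
    (hx : IsCaratheodorySol g t₀ x) (hy : IsCaratheodorySol g t₀ y) (ht : t₀ ≤ t) :
    x t - y t = (x t₀ - y t₀) + ∫ τ in t₀..t, (g τ (x τ) - g τ (y τ)) := by
  rw [(hx.2 t ht).2, (hy.2 t ht).2, intervalIntegral.integral_sub (hx.2 t ht).1 (hy.2 t ht).1]
  abel

/-- If `f` is one-sided Lipschitz with constant `-c < 0` for almost every
`t ≥ t₀`, then any two Caratheodory solutions of `ż = f(z, t)` converge
exponentially towards each other with rate `c`; in particular their difference
tends to `0`. -/
theorem contraction_of_one_sided_lipschitz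
    {n : ℕ}
    (f : EuclideanSpace ℝ (Fin n) → ℝ → EuclideanSpace ℝ (Fin n))
    (t₀ c : ℝ) (hc : 0 < c)
    (hosl : ∀ᵐ t ∂(volume : Measure ℝ), t₀ ≤ t →
      ∀ a b : EuclideanSpace ℝ (Fin n),
        ⟪f a t - f b t, a - b⟫ ≤ -c * ‖a - b‖ ^ 2)
    (x y : ℝ → EuclideanSpace ℝ (Fin n))
    (hx : IsCaratheodorySol (fun t z => f z t) t₀ x)
    (hy : IsCaratheodorySol (fun t z => f z t) t₀ y) :
    (∀ t, t₀ ≤ t → ‖x t - y t‖ ≤ Real.exp (-c * (t - t₀)) * ‖x t₀ - y t₀‖) ∧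
    Filter.Tendsto (fun t => x t - y t) Filter.atTop (nhds 0) := by
  have hdecay : ∀ t, t₀ ≤ t → ‖x t - y t‖ ≤ Real.exp (-c * (t - t₀)) * ‖x t₀ - y t₀‖ := by
    intro t ht
    refine norm_le_exp_neg_mul_of_inner_le (w := fun τ ↦ x τ - y τ) ht
      ((hx.2 t ht).1.sub (hy.2 t ht).1) (fun τ hτ ↦ hx.sub_eq_add_integral hy hτ.1) ?_
    filter_upwards [hosl] with τ hτ hmem using hτ hmem.1 _ _
  have hexp : Tendsto (fun t ↦ Real.exp (-c * (t - t₀)) * ‖x t₀ - y t₀‖) atTop (𝓝 0) := by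
    simpa [sub_eq_add_neg] using (Real.tendsto_exp_atBot.comp <|
      (tendsto_atTop_add_const_right atTop (-t₀) tendsto_id).const_mul_atTop_of_neg
        (neg_neg_of_pos hc)).mul_const ‖x t₀ - y t₀‖
  refine ⟨hdecay, squeeze_zero_norm' ?_ hexp⟩
  filter_upwards [eventually_ge_atTop t₀] with t ht using hdecay t ht
end
end

section
/- (Contraction of piecewise-smooth continuous systems.) Let S₁, …, S_p be disjoint nonempty open subsets of ℝⁿ whose closures cover ℝⁿ, and let f : ℝⁿ × [t₀, ∞) → ℝⁿ be a continuous function such that f(x,t) = F_i(x,t) for x ∈ S_i, where each F_i is continuously differentiable in x on an open neighborhood of the closure of S_i. Suppose there are constants c_i > 0 with ⟨D_x F_i(x,t) v, v⟩ ≤ −c_i‖v‖² for every x in the closure of S_i, every v ∈ ℝⁿ and every t ≥ t₀, and set c := min_i c_i. Let C ⊆ ℝⁿ be a K-reachable set and let x, y be two Caratheodory solutions of ż = f(z,t) with x(s), y(s) ∈ C for all s ∈ [t₀, t]. Then ‖x(t) − y(t)‖ ≤ K e^{−c(t−t₀)} ‖x(t₀) − y(t₀)‖. -/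
/-! Gluing the pieces gives a field with one-sided Lipschitz constant `-cm`: along the segment
`γ r = b + r • (a - b)`, the function `r ↦ ⟪f (γ r), a - b⟫` coincides on finitely many closed
pieces with `C¹` functions whose derivatives are at most `-cm * ‖a - b‖ ^ 2`, so its right slopes
are eventually below any larger bound and a fencing argument gives
`⟪f a - f b, a - b⟫ ≤ -cm * ‖a - b‖ ^ 2`. Along two solutions, `e^{2 cm (s - t₀)} ‖x s - y s‖²`
is then nonincreasing, which is the estimate with `K = 1`; and a `K`-reachable set with two
distinct points has `K ≥ 1`, since a curve is at least as long as its chord. -/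

open scoped RealInnerProductSpace
open MeasureTheory

noncomputable section

def KReachable {E : Type*} [NormedAddCommGroup E] [NormedSpace ℝ E]
    (K : ℝ) (C : Set E) : Prop :=
  ∀ x₀ ∈ C, ∀ y₀ ∈ C, ∃ γ : ℝ → E,
    ContDiffOn ℝ 1 γ (Set.Icc 0 1) ∧
    (∀ r ∈ Set.Icc (0 : ℝ) 1, γ r ∈ C) ∧
    γ 0 = x₀ ∧ γ 1 = y₀ ∧
    ∀ r ∈ Set.Icc (0 : ℝ) 1, ‖derivWithin γ (Set.Icc 0 1) r‖ ≤ K * ‖y₀ - x₀‖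

open Set Filter Topology

section Piecewise

variable {ι : Type*} [Finite ι] {φ : ℝ → ℝ} {A V : ι → Set ℝ} {ψ : ι → ℝ → ℝ} {B : ℝ}

theorem eventually_slope_le_of_piecewise (hA : ∀ i, IsClosed (A i)) (hcover : ⋃ i, A i = univ)
    (hV : ∀ i, IsOpen (V i)) (hAV : ∀ i, A i ⊆ V i) (hψ : ∀ i, ContDiffOn ℝ 1 (ψ i) (V i))
    (hφψ : ∀ i, EqOn φ (ψ i) (A i)) (hB : ∀ i, ∀ r ∈ A i, deriv (ψ i) r ≤ B)
    {ε : ℝ} (hε : 0 < ε) (r : ℝ) :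
    ∀ᶠ z in 𝓝[>] r, slope φ r z ≤ B + ε := by
  have hpieces : ∀ᶠ z in 𝓝 r, ∀ i, z ∈ A i → r ∈ A i := by
    refine eventually_all.2 fun i => ?_
    by_cases hr : r ∈ A i
    · exact .of_forall fun _ _ => hr
    · filter_upwards [(hA i).isOpen_compl.mem_nhds hr] with z hz hzA using absurd hzA hz
  have hderiv : ∀ᶠ z in 𝓝 r, ∀ i, r ∈ A i → z ∈ V i ∧ deriv (ψ i) z < B + ε := by
    refine eventually_all.2 fun i => ?_
    by_cases hr : r ∈ A i
    · have hVr : V i ∈ 𝓝 r := (hV i).mem_nhds (hAV i hr)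
      have hcont : ContinuousAt (deriv (ψ i)) r :=
        ((hψ i).continuousOn_deriv_of_isOpen (hV i) le_rfl).continuousAt hVr
      have hlt : deriv (ψ i) r < B + ε := by linarith [hB i r hr]
      filter_upwards [hVr, hcont.eventually_lt continuousAt_const hlt] with z hzV hz _
        using ⟨hzV, hz⟩
    · exact .of_forall fun _ h => absurd h hr
  obtain ⟨l, u, hlu, hsub⟩ := mem_nhds_iff_exists_Ioo_subset.1 (hpieces.and hderiv)
  filter_upwards [Ioo_mem_nhdsGT hlu.2] with z hz
  obtain ⟨j, hzj⟩ := mem_iUnion.1 (hcover ▸ mem_univ z)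
  have hrj : r ∈ A j := (hsub ⟨hlu.1.trans hz.1, hz.2⟩).1 j hzj
  have hIcc : ∀ ρ ∈ Icc r z, ρ ∈ V j ∧ deriv (ψ j) ρ < B + ε := fun ρ hρ =>
    (hsub ⟨hlu.1.trans_le hρ.1, hρ.2.trans_lt hz.2⟩).2 j hrj
  have hdiff : DifferentiableOn ℝ (ψ j) (Icc r z) := fun ρ hρ =>
    ((hψ j).differentiableOn one_ne_zero ρ (hIcc ρ hρ).1).differentiableAt
      ((hV j).mem_nhds (hIcc ρ hρ).1) |>.differentiableWithinAt
  have hmvt := (convex_Icc r z).image_sub_le_mul_sub_of_deriv_le hdiff.continuousOn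
    (hdiff.mono interior_subset) (fun ρ hρ => (hIcc ρ (interior_subset hρ)).2.le)
    r (left_mem_Icc.2 hz.1.le) z (right_mem_Icc.2 hz.1.le) hz.1.le
  rw [slope_def_field, hφψ j hzj, hφψ j hrj, div_le_iff₀ (sub_pos.2 hz.1)]
  exact hmvt

theorem sub_le_mul_sub_of_piecewise (hA : ∀ i, IsClosed (A i)) (hcover : ⋃ i, A i = univ)
    (hV : ∀ i, IsOpen (V i)) (hAV : ∀ i, A i ⊆ V i) (hψ : ∀ i, ContDiffOn ℝ 1 (ψ i) (V i))
    (hφψ : ∀ i, EqOn φ (ψ i) (A i)) (hB : ∀ i, ∀ r ∈ A i, deriv (ψ i) r ≤ B)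
    {a b : ℝ} (hab : a ≤ b) : φ b - φ a ≤ B * (b - a) := by
  have hφ : Continuous φ := (locallyFinite_of_finite A).continuous hcover hA fun i =>
    ((hψ i).continuousOn.mono (hAV i)).congr (hφψ i)
  have hfence := image_le_of_liminf_slope_right_le_deriv_boundary (a := a) (b := b)
    (B := fun x => φ a + B * (x - a)) (B' := fun _ => B) hφ.continuousOn (by simp)
    (by fun_prop) (fun x _ => by simpa using
      (((hasDerivWithinAt_id x (Ici x)).sub_const a).const_mul B).const_add (φ a))
    (fun r _ q hq => (eventually_slope_le_of_piecewise hA hcover hV hAV hψ hφψ hB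
      (half_pos (sub_pos.2 hq)) r |>.mono fun z hz => hz.trans_lt (by linarith)).frequently)
    (right_mem_Icc.2 hab)
  linarith

end Piecewise

theorem inner_sub_le_of_piecewise {E ι : Type*} [NormedAddCommGroup E] [InnerProductSpace ℝ E]
    [Finite ι] {A U : ι → Set E} {G : ι → E → E} {g : E → E} {M : ℝ}
    (hA : ∀ i, IsClosed (A i)) (hcover : ⋃ i, A i = univ) (hU : ∀ i, IsOpen (U i))
    (hAU : ∀ i, A i ⊆ U i) (hG : ∀ i, ContDiffOn ℝ 1 (G i) (U i)) (hgG : ∀ i, EqOn g (G i) (A i))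
    (hM : ∀ i, ∀ z ∈ A i, ∀ v, ⟪fderiv ℝ (G i) z v, v⟫ ≤ M * ‖v‖ ^ 2) (a b : E) :
    ⟪g a - g b, a - b⟫ ≤ M * ‖a - b‖ ^ 2 := by
  set γ : ℝ → E := fun r => b + r • (a - b)
  have hγ : ContDiff ℝ 1 γ := by fun_prop
  have hγ' (r : ℝ) : HasDerivAt γ (a - b) r :=
    (((hasDerivAt_id r).smul_const (a - b)).const_add b).congr_deriv (one_smul ℝ _)
  have hψ' (i : ι) (r : ℝ) (hr : γ r ∈ U i) :
      HasDerivAt (fun r => ⟪G i (γ r), a - b⟫) ⟪fderiv ℝ (G i) (γ r) (a - b), a - b⟫ r := by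
    have hGd : DifferentiableAt ℝ (G i) (γ r) :=
      ((hG i).differentiableOn one_ne_zero).differentiableAt ((hU i).mem_nhds hr)
    simpa using (hGd.hasFDerivAt.comp_hasDerivAt r (hγ' r)).inner ℝ (hasDerivAt_const r (a - b))
  have key := sub_le_mul_sub_of_piecewise (φ := fun r => ⟪g (γ r), a - b⟫)
    (A := fun i => γ ⁻¹' A i) (V := fun i => γ ⁻¹' U i) (ψ := fun i r => ⟪G i (γ r), a - b⟫)
    (fun i => (hA i).preimage hγ.continuous) (by rw [← preimage_iUnion, hcover, preimage_univ])
    (fun i => (hU i).preimage hγ.continuous) (fun i => preimage_mono (hAU i))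
    (fun i => ((hG i).comp hγ.contDiffOn (mapsTo_preimage _ _)).inner ℝ contDiffOn_const)
    (fun i r hr => by simp only [hgG i hr])
    (fun i r hr => (hψ' i r (hAU i hr)).deriv ▸ hM i (γ r) hr (a - b)) zero_le_one
  simpa [γ, inner_sub_left] using key

theorem IsCaratheodorySol.hasDerivAt {E : Type*} [NormedAddCommGroup E] [NormedSpace ℝ E]
    [CompleteSpace E] {g : ℝ → E → E} {t₀ : ℝ} {z : ℝ → E} (hz : IsCaratheodorySol g t₀ z)
    (hg : Continuous (Function.uncurry g)) {s : ℝ} (hs : t₀ < s) :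
    HasDerivAt z (g s (z s)) s := by
  have hcont : ContinuousOn (fun τ => g τ (z τ)) (Ioi t₀) :=
    hg.comp_continuousOn (continuousOn_id.prodMk (hz.1.mono Ioi_subset_Ici_self))
  have hFTC := (intervalIntegral.integral_hasDerivAt_right (hz.2 s hs.le).1
    (hcont.stronglyMeasurableAtFilter isOpen_Ioi s hs)
    (hcont.continuousAt (isOpen_Ioi.mem_nhds hs))).const_add (z t₀)
  refine hFTC.congr_of_eventuallyEq ?_
  filter_upwards [isOpen_Ioi.mem_nhds hs] with σ hσ using (hz.2 σ (le_of_lt hσ)).2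

theorem norm_le_exp_mul_of_inner_deriv_le {E : Type*} [NormedAddCommGroup E]
    [InnerProductSpace ℝ E] {w w' : ℝ → E} {a b c : ℝ} (hab : a ≤ b)
    (hw : ContinuousOn w (Icc a b)) (hw' : ∀ s ∈ Ioo a b, HasDerivAt w (w' s) s)
    (hc : ∀ s ∈ Ioo a b, ⟪w' s, w s⟫ ≤ -c * ‖w s‖ ^ 2) :
    ‖w b‖ ≤ Real.exp (-c * (b - a)) * ‖w a‖ := by
  set energy : ℝ → ℝ := fun s => Real.exp (2 * c * (s - a)) * ‖w s‖ ^ 2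
  have henergy' (s : ℝ) (hs : s ∈ Ioo a b) : HasDerivAt energy
      (Real.exp (2 * c * (s - a)) * (2 * c) * ‖w s‖ ^ 2
        + Real.exp (2 * c * (s - a)) * (2 * ⟪w s, w' s⟫)) s :=
    ((((hasDerivAt_id s).sub_const a).const_mul (2 * c)).exp.congr_deriv (by simp)).mul
      (hw' s hs).norm_sq
  have hanti : AntitoneOn energy (Icc a b) := by
    refine antitoneOn_of_deriv_nonpos (convex_Icc a b) (by fun_prop) ?_ ?_ <;> rw [interior_Icc]
    · exact fun s hs => (henergy' s hs).differentiableAt.differentiableWithinAt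
    · intro s hs
      rw [(henergy' s hs).deriv, real_inner_comm]
      nlinarith [mul_le_mul_of_nonneg_left (hc s hs) (Real.exp_pos (2 * c * (s - a))).le]
  have henergy : energy b ≤ energy a := hanti (left_mem_Icc.2 hab) (right_mem_Icc.2 hab) hab
  have hexp : Real.exp (-c * (b - a)) ^ 2 * Real.exp (2 * c * (b - a)) = 1 := by
    rw [← Real.exp_nat_mul, ← Real.exp_add]
    ring_nf
    exact Real.exp_zero
  refine (pow_le_pow_iff_left₀ (norm_nonneg _) (by positivity) two_ne_zero).1 ?_
  calc ‖w b‖ ^ 2 = Real.exp (-c * (b - a)) ^ 2 * energy b := by rw [← mul_assoc, hexp, one_mul]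
    _ ≤ Real.exp (-c * (b - a)) ^ 2 * energy a := by gcongr
    _ = (Real.exp (-c * (b - a)) * ‖w a‖) ^ 2 := by simp [energy, mul_pow]

theorem KReachable.norm_sub_le_mul {E : Type*} [NormedAddCommGroup E] [NormedSpace ℝ E]
    {K : ℝ} {C : Set E} (hC : KReachable K C) {x₀ y₀ : E} (hx₀ : x₀ ∈ C) (hy₀ : y₀ ∈ C) :
    ‖y₀ - x₀‖ ≤ K * ‖y₀ - x₀‖ := by
  obtain ⟨γ, hγ, -, hγ0, hγ1, hγ'⟩ := hC x₀ hx₀ y₀ hy₀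
  simpa [hγ0, hγ1] using (convex_Icc (0 : ℝ) 1).norm_image_sub_le_of_norm_derivWithin_le
    (hγ.differentiableOn one_ne_zero) hγ' (left_mem_Icc.2 zero_le_one) (right_mem_Icc.2 zero_le_one)

theorem contraction_of_pwsc_general
    {n p : ℕ}
    (S : Fin p → Set (EuclideanSpace ℝ (Fin n)))
    (hcover : (⋃ i, closure (S i)) = Set.univ)
    (t₀ : ℝ)
    (F : Fin p → EuclideanSpace ℝ (Fin n) → ℝ → EuclideanSpace ℝ (Fin n))
    (f : EuclideanSpace ℝ (Fin n) → ℝ → EuclideanSpace ℝ (Fin n))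
    (hf_cont : Continuous fun pr : EuclideanSpace ℝ (Fin n) × ℝ => f pr.1 pr.2)
    (hmatch : ∀ i, ∀ x ∈ S i, ∀ t, t₀ ≤ t → f x t = F i x t)
    (hF : ∀ i, ∃ U : Set (EuclideanSpace ℝ (Fin n)), IsOpen U ∧ closure (S i) ⊆ U ∧
      ∀ t, t₀ ≤ t → ContDiffOn ℝ 1 (fun x => F i x t) U)
    (c : Fin p → ℝ)
    (hμ : ∀ i, ∀ x ∈ closure (S i), ∀ t, t₀ ≤ t → ∀ v : EuclideanSpace ℝ (Fin n),
      ⟪fderiv ℝ (fun z => F i z t) x v, v⟫ ≤ -(c i) * ‖v‖ ^ 2)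
    (cm : ℝ) (hcm : IsGLB (Set.range c) cm)
    (C : Set (EuclideanSpace ℝ (Fin n))) (K : ℝ)
    (hC : KReachable K C)
    (x y : ℝ → EuclideanSpace ℝ (Fin n))
    (hx : IsCaratheodorySol (fun t z => f z t) t₀ x)
    (hy : IsCaratheodorySol (fun t z => f z t) t₀ y)
    (t : ℝ) (ht : t₀ ≤ t)
    (hxC : ∀ s ∈ Set.Icc t₀ t, x s ∈ C)
    (hyC : ∀ s ∈ Set.Icc t₀ t, y s ∈ C) :
    ‖x t - y t‖ ≤ K * Real.exp (-cm * (t - t₀)) * ‖x t₀ - y t₀‖ := by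
  choose U hU hSU hFU using hF
  have hfF (s : ℝ) (hs : t₀ ≤ s) (i : Fin p) : EqOn (f · s) (F i · s) (closure (S i)) :=
    EqOn.of_subset_closure (fun z hz => hmatch i z hz s hs) (by fun_prop)
      ((hFU i s hs).continuousOn.mono (hSU i)) subset_closure subset_rfl
  have hlip (s : ℝ) (hs : t₀ ≤ s) (a b : EuclideanSpace ℝ (Fin n)) :
      ⟪f a s - f b s, a - b⟫ ≤ -cm * ‖a - b‖ ^ 2 :=
    inner_sub_le_of_piecewise (fun _ => isClosed_closure) hcover hU hSU (fun i => hFU i s hs)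
      (hfF s hs) (fun i z hz v => (hμ i z hz s hs v).trans (by gcongr; exact hcm.1 ⟨i, rfl⟩)) a b
  have hfc : Continuous (Function.uncurry fun t z => f z t) := hf_cont.comp continuous_swap
  have hdecay : ‖x t - y t‖ ≤ Real.exp (-cm * (t - t₀)) * ‖x t₀ - y t₀‖ :=
    norm_le_exp_mul_of_inner_deriv_le ht ((hx.1.sub hy.1).mono Icc_subset_Ici_self)
      (fun s hs => (hx.hasDerivAt hfc hs.1).sub (hy.hasDerivAt hfc hs.1))
      (fun s hs => hlip s hs.1.le (x s) (y s))
  have hK := hC.norm_sub_le_mul (hyC t₀ ⟨le_rfl, ht⟩) (hxC t₀ ⟨le_rfl, ht⟩)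
  calc ‖x t - y t‖ ≤ Real.exp (-cm * (t - t₀)) * ‖x t₀ - y t₀‖ := hdecay
    _ ≤ Real.exp (-cm * (t - t₀)) * (K * ‖x t₀ - y t₀‖) := by gcongr
    _ = K * Real.exp (-cm * (t - t₀)) * ‖x t₀ - y t₀‖ := by ring

/-- Contraction of piecewise-smooth continuous (PWSC) systems: a continuous
vector field defined by continuously differentiable pieces `F i` on disjoint
open regions `S i` whose closures cover the space; if each piece has Euclidean
matrix measure of its Jacobian bounded by `-(c i) < 0`, then any two
Caratheodory solutions remaining in a `K`-reachable set `C` converge towards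
each other exponentially with rate `cm = min_i c i`. -/
theorem contraction_of_pwsc
    {n p : ℕ} (hp : 0 < p)
    (S : Fin p → Set (EuclideanSpace ℝ (Fin n)))
    (hopen : ∀ i, IsOpen (S i)) (hne : ∀ i, (S i).Nonempty)
    (hdisj : Pairwise fun i j => Disjoint (S i) (S j))
    (hcover : (⋃ i, closure (S i)) = Set.univ)
    (t₀ : ℝ)
    (F : Fin p → EuclideanSpace ℝ (Fin n) → ℝ → EuclideanSpace ℝ (Fin n))
    (f : EuclideanSpace ℝ (Fin n) → ℝ → EuclideanSpace ℝ (Fin n))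
    (hf_cont : Continuous fun pr : EuclideanSpace ℝ (Fin n) × ℝ => f pr.1 pr.2)
    (hmatch : ∀ i, ∀ x ∈ S i, ∀ t, t₀ ≤ t → f x t = F i x t)
    (hF : ∀ i, ∃ U : Set (EuclideanSpace ℝ (Fin n)), IsOpen U ∧ closure (S i) ⊆ U ∧
      ∀ t, t₀ ≤ t → ContDiffOn ℝ 1 (fun x => F i x t) U)
    (c : Fin p → ℝ) (hc : ∀ i, 0 < c i)
    (hμ : ∀ i, ∀ x ∈ closure (S i), ∀ t, t₀ ≤ t → ∀ v : EuclideanSpace ℝ (Fin n),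
      ⟪fderiv ℝ (fun z => F i z t) x v, v⟫ ≤ -(c i) * ‖v‖ ^ 2)
    (cm : ℝ) (hcm : IsGLB (Set.range c) cm)
    (C : Set (EuclideanSpace ℝ (Fin n))) (K : ℝ) (hK : 0 < K)
    (hC : KReachable K C)
    (x y : ℝ → EuclideanSpace ℝ (Fin n))
    (hx : IsCaratheodorySol (fun t z => f z t) t₀ x)
    (hy : IsCaratheodorySol (fun t z => f z t) t₀ y)
    (t : ℝ) (ht : t₀ ≤ t)
    (hxC : ∀ s ∈ Set.Icc t₀ t, x s ∈ C)
    (hyC : ∀ s ∈ Set.Icc t₀ t, y s ∈ C) :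
    ‖x t - y t‖ ≤ K * Real.exp (-cm * (t - t₀)) * ‖x t₀ - y t₀‖ :=
  contraction_of_pwsc_general S hcover t₀ F f hf_cont hmatch hF c hμ cm hcm C K hC x y hx hy t ht
    hxC hyC
end
end

section
/- (Stability of arbitrarily switched linear systems, Euclidean matrix measure.) Let A : ℝ → M_n(ℝ) be a measurable, bounded matrix-valued function (e.g. arising from a switched linear system ẋ = A(t,σ)x), and let c > 0 be such that for almost every t ≥ t₀ and every v ∈ ℝⁿ, vᵀ A(t) v ≤ −c‖v‖². Then every Caratheodory solution x of ẋ = A(t)x satisfies ‖x(t)‖ ≤ e^{−c(t−t₀)} ‖x(t₀)‖ for all t ≥ t₀, independently of the switching sequence; in particular all solutions converge asymptotically to the origin and exponentially towards each other. -/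
/-!
Along a solution, `u = ‖x‖²` satisfies the energy identity
`u t - u s = 2 ∫ₛᵗ ⟪A x, x⟫`; no derivative of `x` is needed for it, since by Fubini
`‖∫ₐᵇ g‖² = 2 ∫ₐᵇ ⟪g τ, ∫ₐ^τ g⟫ dτ` for every integrable `g`. The a.e. bound `⟪A v, v⟫ ≤ -c ‖v‖²`
then gives `u t - u s ≤ -2c ∫ₛᵗ u`. The right-hand side is differentiable in `t`, so Grönwall's
lemma applies to `u` and yields `u t ≤ e^{-2c (t - t₀)} u t₀`.
-/

open scoped RealInnerProductSpace
open MeasureTheory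

noncomputable section

open Set Filter Topology

theorem MeasureTheory.Integrable.inner_prod {E α : Type*} [NormedAddCommGroup E]
    [InnerProductSpace ℝ E] [MeasurableSpace α] {μ : Measure α} {g : α → E}
    (hg : Integrable g μ) : Integrable (fun p : α × α => ⟪g p.1, g p.2⟫) (μ.prod μ) :=
  (hg.norm.mul_prod hg.norm).mono' (hg.1.comp_fst.inner hg.1.comp_snd)
    (.of_forall fun _ => norm_inner_le_norm _ _)

section SquareNorm

variable {E : Type*} [NormedAddCommGroup E] [InnerProductSpace ℝ E] {g x : ℝ → E} {a b : ℝ}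

theorem eqOn_inner_add_inner_setIntegral_Ioc
    (hx : ∀ t ∈ Icc a b, x t = x a + ∫ τ in a..t, g τ) :
    EqOn (fun τ => ⟪g τ, x τ⟫) (fun τ => ⟪g τ, x a⟫ + ⟪g τ, ∫ s in Ioc a τ, g s⟫) (Ioc a b) :=
  fun τ hτ => by
    dsimp only
    rw [hx τ (Ioc_subset_Icc_self hτ), intervalIntegral.integral_of_le hτ.1.le, inner_add_right]

variable [CompleteSpace E]

theorem setIntegral_Ioc_indicator_Iic_inner (hg : IntegrableOn g (Ioc a b)) {τ : ℝ}
    (hτ : τ ∈ Ioc a b) :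
    ∫ s in Ioc a b, (Iic τ).indicator (fun s => ⟪g τ, g s⟫) s = ⟪g τ, ∫ s in Ioc a τ, g s⟫ := by
  rw [setIntegral_indicator measurableSet_Iic, Ioc_inter_Iic, min_eq_right hτ.2]
  exact integral_inner (hg.mono_set (Ioc_subset_Ioc_right hτ.2)) (g τ)

theorem integrableOn_inner_setIntegral_Ioc (hg : IntegrableOn g (Ioc a b)) :
    IntegrableOn (fun τ => ⟪g τ, ∫ s in Ioc a τ, g s⟫) (Ioc a b) := by
  have hS : MeasurableSet {p : ℝ × ℝ | p.2 ≤ p.1} := measurableSet_le measurable_snd measurable_fst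
  refine (hg.inner_prod.indicator hS).integral_prod_left.congr ?_
  filter_upwards [ae_restrict_mem measurableSet_Ioc] with τ hτ
  exact setIntegral_Ioc_indicator_Iic_inner hg hτ

/-- Split the double integral of `⟪g τ, g s⟫` along the diagonal; the swap `τ ↔ s` identifies
the two halves, and the diagonal itself is null. -/
theorem sq_norm_setIntegral_Ioc (hg : IntegrableOn g (Ioc a b)) :
    ‖∫ s in Ioc a b, g s‖ ^ 2 = 2 * ∫ τ in Ioc a b, ⟪g τ, ∫ s in Ioc a τ, g s⟫ := by
  set ν := volume.restrict (Ioc a b)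
  set K : ℝ × ℝ → ℝ := fun p => ⟪g p.1, g p.2⟫
  have hK : Integrable K (ν.prod ν) := hg.inner_prod
  set S : Set (ℝ × ℝ) := {p | p.2 ≤ p.1}
  have hS : MeasurableSet S := measurableSet_le measurable_snd measurable_fst
  have lower : ∫ p in S, K p ∂(ν.prod ν) = ∫ τ in Ioc a b, ⟪g τ, ∫ s in Ioc a τ, g s⟫ := by
    rw [← integral_indicator hS, integral_prod _ (hK.indicator hS)]
    exact setIntegral_congr_fun measurableSet_Ioc fun τ hτ =>
      setIntegral_Ioc_indicator_Iic_inner hg hτ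
  have upper : ∫ p in Sᶜ, K p ∂(ν.prod ν) = ∫ τ in Ioc a b, ⟪g τ, ∫ s in Ioc a τ, g s⟫ := by
    rw [← integral_indicator hS.compl, ← integral_prod_swap,
      integral_prod (fun p => Sᶜ.indicator K p.swap) (hK.indicator hS.compl).swap]
    refine setIntegral_congr_fun measurableSet_Ioc fun τ hτ => ?_
    rw [← setIntegral_Ioc_indicator_Iic_inner hg hτ]
    refine integral_congr_ae ?_
    filter_upwards [ae_restrict_of_ae (measure_eq_zero_iff_ae_notMem.1 (measure_singleton τ))]
      with s hs
    rcases lt_or_gt_of_ne (mt mem_singleton_iff.2 hs) with hlt | hgt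
    · simp [indicator, S, K, hlt, hlt.le, real_inner_comm]
    · simp [indicator, S, K, hgt.not_ge, hgt.not_gt]
  have total : ∫ p, K p ∂(ν.prod ν) = ‖∫ s in Ioc a b, g s‖ ^ 2 := by
    rw [integral_prod _ hK]
    calc ∫ τ, ∫ s, K (τ, s) ∂ν ∂ν = ∫ τ, ⟪∫ s in Ioc a b, g s, g τ⟫ ∂ν :=
          integral_congr_ae (.of_forall fun τ =>
            (integral_inner hg (g τ)).trans (real_inner_comm _ _))
      _ = ‖∫ s in Ioc a b, g s‖ ^ 2 := by rw [integral_inner hg, real_inner_self_eq_norm_sq]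
  rw [← total, ← integral_add_compl hS hK, lower, upper, two_mul]

theorem intervalIntegrable_inner_of_eq_add_integral (hab : a ≤ b)
    (hg : IntervalIntegrable g volume a b) (hx : ∀ t ∈ Icc a b, x t = x a + ∫ τ in a..t, g τ) :
    IntervalIntegrable (fun τ => ⟪g τ, x τ⟫) volume a b := by
  rw [intervalIntegrable_iff_integrableOn_Ioc_of_le hab] at hg ⊢
  exact IntegrableOn.congr_fun
    ((hg.inner_const (x a)).add (integrableOn_inner_setIntegral_Ioc hg))
    (eqOn_inner_add_inner_setIntegral_Ioc hx).symm measurableSet_Ioc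

theorem sq_norm_eq_add_integral_inner (hab : a ≤ b) (hg : IntervalIntegrable g volume a b)
    (hx : ∀ t ∈ Icc a b, x t = x a + ∫ τ in a..t, g τ) :
    ‖x b‖ ^ 2 = ‖x a‖ ^ 2 + 2 * ∫ τ in a..b, ⟪g τ, x τ⟫ := by
  rw [intervalIntegrable_iff_integrableOn_Ioc_of_le hab] at hg
  have hconst : ∫ τ in Ioc a b, ⟪g τ, x a⟫ = ⟪x a, ∫ s in Ioc a b, g s⟫ := by
    rw [← integral_inner hg]
    simp_rw [real_inner_comm (x a)]
  rw [intervalIntegral.integral_of_le hab,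
    setIntegral_congr_fun measurableSet_Ioc (eqOn_inner_add_inner_setIntegral_Ioc hx),
    integral_add (hg.inner_const (x a)) (integrableOn_inner_setIntegral_Ioc hg), hconst, mul_add,
    ← sq_norm_setIntegral_Ioc hg, hx b (right_mem_Icc.2 hab), intervalIntegral.integral_of_le hab,
    norm_add_sq_real]
  ring

end SquareNorm

section Gronwall

variable {u : ℝ → ℝ} {a K : ℝ}

theorem frequently_slope_lt_of_sub_le_integral (hu : ContinuousOn u (Ici a))
    (hsub : ∀ s z, a ≤ s → s ≤ z → u z - u s ≤ ∫ τ in s..z, K * u τ) {s r : ℝ} (hs : a ≤ s)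
    (hr : K * u s < r) : ∃ᶠ z in 𝓝[>] s, (z - s)⁻¹ * (u z - u s) < r := by
  set W : ℝ → ℝ := fun z => ∫ τ in s..z, K * u τ
  have hKu : ContinuousOn (fun τ => K * u τ) (Ici s) :=
    continuousOn_const.mul (hu.mono (Ici_subset_Ici.2 hs))
  have hW : HasDerivWithinAt W (K * u s) (Ioi s) s :=
    (intervalIntegral.integral_hasDerivWithinAt_right (t := Ioi s) IntervalIntegrable.refl
      ⟨Ioi s, self_mem_nhdsWithin, (hKu.mono Ioi_subset_Ici_self).aestronglyMeasurable
        measurableSet_Ioi⟩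
      ((hKu.continuousWithinAt self_mem_Ici).mono Ioi_subset_Ici_self)).mono
      Ioi_subset_Ici_self
  have hslope : ∀ᶠ z in 𝓝[>] s, slope W s z < r := by
    rw [hasDerivWithinAt_iff_tendsto_slope, sdiff_singleton_eq_self self_notMem_Ioi] at hW
    exact hW.eventually_lt_const hr
  refine ((hslope.and self_mem_nhdsWithin).mono fun z ⟨hz, hsz⟩ => ?_).frequently
  calc (z - s)⁻¹ * (u z - u s) ≤ (z - s)⁻¹ * W z :=
        mul_le_mul_of_nonneg_left (hsub s z hs hsz.le) (inv_nonneg.2 (sub_nonneg.2 hsz.le))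
    _ = slope W s z := by simp [slope_def_module, W]
    _ < r := hz

theorem le_mul_exp_of_sub_le_integral (hu : ContinuousOn u (Ici a))
    (hsub : ∀ s z, a ≤ s → s ≤ z → u z - u s ≤ ∫ τ in s..z, K * u τ) {t : ℝ} (ht : a ≤ t) :
    u t ≤ u a * Real.exp (K * (t - a)) := by
  have := le_gronwallBound_of_liminf_deriv_right_le (hu.mono Icc_subset_Ici_self)
    (fun s hs r hr => frequently_slope_lt_of_sub_le_integral hu hsub hs.1 hr) le_rfl
    (fun _ _ => (add_zero _).ge) t (right_mem_Icc.2 ht)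
  rwa [gronwallBound_ε0] at this

end Gronwall

namespace IsCaratheodorySol

section NormedSpace

variable {E : Type*} [NormedAddCommGroup E] [NormedSpace ℝ E] {g : ℝ → E → E} {t₀ s t : ℝ}
  {z : ℝ → E}

theorem intervalIntegrable (hz : IsCaratheodorySol g t₀ z) (hs : t₀ ≤ s) (ht : t₀ ≤ t) :
    IntervalIntegrable (fun τ => g τ (z τ)) volume s t :=
  (hz.2 s hs).1.symm.trans (hz.2 t ht).1

theorem eq_add_integral (hz : IsCaratheodorySol g t₀ z) (hs : t₀ ≤ s) (ht : t₀ ≤ t) :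
    z t = z s + ∫ τ in s..t, g τ (z τ) := by
  rw [← intervalIntegral.integral_interval_sub_left (hz.2 t ht).1 (hz.2 s hs).1, (hz.2 t ht).2,
    (hz.2 s hs).2]
  abel

end NormedSpace

section Dissipative

variable {E : Type*} [NormedAddCommGroup E] [InnerProductSpace ℝ E] [CompleteSpace E]
  {g : ℝ → E → E} {t₀ c : ℝ} {z : ℝ → E}

theorem sq_norm_sub_sq_norm_le_integral
    (hdiss : ∀ᵐ t ∂(volume : Measure ℝ), t₀ ≤ t → ∀ v, ⟪g t v, v⟫ ≤ -c * ‖v‖ ^ 2)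
    (hz : IsCaratheodorySol g t₀ z) {s t : ℝ} (hs : t₀ ≤ s) (hst : s ≤ t) :
    ‖z t‖ ^ 2 - ‖z s‖ ^ 2 ≤ ∫ τ in s..t, -(2 * c) * ‖z τ‖ ^ 2 := by
  have hrep : ∀ τ ∈ Icc s t, z τ = z s + ∫ σ in s..τ, g σ (z σ) :=
    fun τ hτ => hz.eq_add_integral hs (hs.trans hτ.1)
  have hint := hz.intervalIntegrable hs (hs.trans hst)
  have hcont : ContinuousOn (fun τ => -(2 * c) * ‖z τ‖ ^ 2) (Icc s t) :=
    continuousOn_const.mul ((hz.1.mono fun τ hτ => hs.trans hτ.1).norm.pow 2)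
  rw [sq_norm_eq_add_integral_inner hst hint hrep, add_sub_cancel_left,
    ← intervalIntegral.integral_const_mul]
  refine intervalIntegral.integral_mono_ae_restrict hst
    ((intervalIntegrable_inner_of_eq_add_integral hst hint hrep).const_mul 2)
    (hcont.intervalIntegrable_of_Icc hst) ?_
  filter_upwards [ae_restrict_mem measurableSet_Icc, ae_restrict_of_ae hdiss] with τ hτ hτdiss
  linarith [hτdiss (hs.trans hτ.1) (z τ)]

theorem norm_le_exp_mul
    (hdiss : ∀ᵐ t ∂(volume : Measure ℝ), t₀ ≤ t → ∀ v, ⟪g t v, v⟫ ≤ -c * ‖v‖ ^ 2)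
    (hz : IsCaratheodorySol g t₀ z) {t : ℝ} (ht : t₀ ≤ t) :
    ‖z t‖ ≤ Real.exp (-c * (t - t₀)) * ‖z t₀‖ := by
  have hsq := le_mul_exp_of_sub_le_integral (hz.1.norm.pow 2)
    (fun _ _ => hz.sq_norm_sub_sq_norm_le_integral hdiss) ht
  rw [← pow_le_pow_iff_left₀ (norm_nonneg _) (by positivity) two_ne_zero]
  calc ‖z t‖ ^ 2 ≤ ‖z t₀‖ ^ 2 * Real.exp (-(2 * c) * (t - t₀)) := hsq
    _ = (Real.exp (-c * (t - t₀)) * ‖z t₀‖) ^ 2 := by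
      rw [mul_pow, ← Real.exp_nat_mul]; ring_nf

end Dissipative

end IsCaratheodorySol

theorem switched_linear_stability_mu2_general
    {n : ℕ}
    (A : ℝ → Matrix (Fin n) (Fin n) ℝ)
    (t₀ c : ℝ)
    (hμ : ∀ᵐ t ∂(volume : Measure ℝ), t₀ ≤ t →
      ∀ v : EuclideanSpace ℝ (Fin n),
        ⟪Matrix.toEuclideanLin (A t) v, v⟫ ≤ -c * ‖v‖ ^ 2)
    (x : ℝ → EuclideanSpace ℝ (Fin n))
    (hx : IsCaratheodorySol (fun t z => Matrix.toEuclideanLin (A t) z) t₀ x) :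
    ∀ t, t₀ ≤ t → ‖x t‖ ≤ Real.exp (-c * (t - t₀)) * ‖x t₀‖ :=
  fun _ ht => hx.norm_le_exp_mul hμ ht

/-- Stability of arbitrarily switched linear systems (Euclidean matrix
measure): if the measurable bounded matrix function `A(t)` satisfies
`vᵀ A(t) v ≤ -c ‖v‖²` for a.e. `t ≥ t₀`, then every Caratheodory solution of
`ẋ = A(t) x` decays exponentially to the origin with rate `c`. -/
theorem switched_linear_stability_mu2
    {n : ℕ}
    (A : ℝ → Matrix (Fin n) (Fin n) ℝ)
    (hmeas : ∀ i j, Measurable fun t => A t i j)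
    (hbdd : ∃ M : ℝ, ∀ t i j, |A t i j| ≤ M)
    (t₀ c : ℝ) (hc : 0 < c)
    (hμ : ∀ᵐ t ∂(volume : Measure ℝ), t₀ ≤ t →
      ∀ v : EuclideanSpace ℝ (Fin n),
        ⟪Matrix.toEuclideanLin (A t) v, v⟫ ≤ -c * ‖v‖ ^ 2)
    (x : ℝ → EuclideanSpace ℝ (Fin n))
    (hx : IsCaratheodorySol (fun t z => Matrix.toEuclideanLin (A t) z) t₀ x) :
    ∀ t, t₀ ≤ t → ‖x t‖ ≤ Real.exp (-c * (t - t₀)) * ‖x t₀‖ :=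
  switched_linear_stability_mu2_general A t₀ c hμ x hx

end
end

section
/- (Stability of arbitrarily switched linear systems, ℓ¹ matrix measure.) Let A : ℝ → M_n(ℝ) be a measurable, bounded matrix-valued function, and let c > 0 be such that for almost every t ≥ t₀ and every column index j, A(t)_{jj} + Σ_{i ≠ j} |A(t)_{ij}| ≤ −c (i.e., the matrix measure induced by the ℓ¹ vector norm satisfies μ₁(A(t)) ≤ −c). Then every Caratheodory solution x of ẋ = A(t)x satisfies ‖x(t)‖₁ ≤ e^{−c(t−t₀)} ‖x(t₀)‖₁ for all t ≥ t₀, where ‖v‖₁ = Σᵢ |vᵢ|; in particular all solutions converge to the origin. -/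
/-!
Let `σ` be the sign vector of `x z`. Then
`‖x z‖₁ - ‖x s‖₁ ≤ σ ⬝ᵥ (x z - x s) = ∫ₛᶻ σ ⬝ᵥ A(τ) x(τ) dτ`, and the column condition gives
`σ ⬝ᵥ A(τ) x(z) ≤ -c ‖x z‖₁` because `σ` is exactly aligned with `x z` (taking the signs at the
right endpoint avoids any case split on vanishing components). As `A` is bounded and `x`
continuous, the remaining term `σ ⬝ᵥ A(τ) (x τ - x z)` is small for `z` close to `s`. So the upper
right Dini derivative of `‖x‖₁` is at most `-c ‖x‖₁`, and Gronwall's inequality finishes.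
-/

open MeasureTheory Matrix

noncomputable section

open Filter Topology Set Finset

theorem abs_sign_le_one (x : ℝ) : |(SignType.sign x : ℝ)| ≤ 1 := by
  rcases SignType.sign x with _ | _ | _ <;> simp

theorem abs_sum_abs_sub_sum_abs_le {ι : Type*} [Fintype ι] (a b : ι → ℝ) :
    |(∑ i, |a i|) - (∑ i, |b i|)| ≤ ∑ i, |a i - b i| := by
  rw [← sum_sub_distrib]
  exact (abs_sum_le_sum_abs _ _).trans (sum_le_sum fun i _ => abs_abs_sub_abs_le_abs_sub _ _)

section MatrixMeasure

variable {ι : Type*} [Fintype ι]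

theorem dotProduct_le_sum_abs {σ : ι → ℝ} (hσ : ∀ i, |σ i| ≤ 1) (v : ι → ℝ) :
    σ ⬝ᵥ v ≤ ∑ i, |v i| :=
  sum_le_sum fun i _ => (le_abs_self _).trans <| by
    rw [abs_mul]; exact mul_le_of_le_one_left (abs_nonneg _) (hσ i)

theorem dotProduct_mulVec_le_of_abs_le {σ : ι → ℝ} (hσ : ∀ i, |σ i| ≤ 1)
    {B : Matrix ι ι ℝ} {M : ℝ} (hB : ∀ i j, |B i j| ≤ M) (u : ι → ℝ) :
    σ ⬝ᵥ (B *ᵥ u) ≤ Fintype.card ι * M * ∑ j, |u j| :=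
  calc σ ⬝ᵥ (B *ᵥ u) ≤ ∑ i, |(B *ᵥ u) i| := dotProduct_le_sum_abs hσ _
    _ ≤ ∑ _i : ι, ∑ j, M * |u j| := sum_le_sum fun i _ =>
        (abs_sum_le_sum_abs _ _).trans <| sum_le_sum fun j _ => by
          rw [abs_mul]; exact mul_le_mul_of_nonneg_right (hB i j) (abs_nonneg _)
    _ = Fintype.card ι * M * ∑ j, |u j| := by
        rw [sum_const, card_univ, nsmul_eq_mul, ← mul_sum, mul_assoc]

variable [DecidableEq ι]

theorem sign_dotProduct_mulVec_le {B : Matrix ι ι ℝ} {μ : ℝ}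
    (hB : ∀ j, B j j + ∑ i ∈ univ.erase j, |B i j| ≤ μ) (w : ι → ℝ) :
    (fun i => (SignType.sign (w i) : ℝ)) ⬝ᵥ (B *ᵥ w) ≤ μ * ∑ j, |w j| := by
  rw [dotProduct_mulVec, mul_sum]
  refine sum_le_sum fun j _ => ?_
  calc ((fun i => (SignType.sign (w i) : ℝ)) ᵥ* B) j * w j
        = B j j * |w j| + ∑ i ∈ univ.erase j, SignType.sign (w i) * B i j * w j := by
          rw [vecMul, dotProduct, sum_mul, ← add_sum_erase _ _ (mem_univ j), ← sign_mul_self]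
          ring
    _ ≤ B j j * |w j| + ∑ i ∈ univ.erase j, |B i j| * |w j| := by
          refine add_le_add_right (sum_le_sum fun i _ => ?_) _
          calc SignType.sign (w i) * B i j * w j ≤ |SignType.sign (w i) * B i j * w j| :=
                le_abs_self _
            _ ≤ |B i j| * |w j| := by
                rw [abs_mul, abs_mul]
                exact mul_le_mul_of_nonneg_right
                  (mul_le_of_le_one_left (abs_nonneg _) (abs_sign_le_one _)) (abs_nonneg _)
    _ = (B j j + ∑ i ∈ univ.erase j, |B i j|) * |w j| := by rw [add_mul, sum_mul]
    _ ≤ μ * |w j| := mul_le_mul_of_nonneg_right (hB j) (abs_nonneg _)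

end MatrixMeasure

section Caratheodory

variable {E : Type*} [NormedAddCommGroup E] [NormedSpace ℝ E] {g : ℝ → E → E} {t₀ s t : ℝ}
  {z : ℝ → E}

theorem IsCaratheodorySol.intervalIntegrable_s7 (hz : IsCaratheodorySol g t₀ z) (hs : t₀ ≤ s)
    (hst : s ≤ t) : IntervalIntegrable (fun τ => g τ (z τ)) volume s t :=
  (hz.2 t (hs.trans hst)).1.mono_set <| by
    rw [uIcc_of_le hst, uIcc_of_le (hs.trans hst)]
    exact Icc_subset_Icc_left hs

theorem IsCaratheodorySol.sub_eq_integral (hz : IsCaratheodorySol g t₀ z) (hs : t₀ ≤ s)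
    (hst : s ≤ t) : z t - z s = ∫ τ in s..t, g τ (z τ) := by
  rw [(hz.2 t (hs.trans hst)).2, (hz.2 s hs).2, ← intervalIntegral.integral_add_adjacent_intervals
    (hz.intervalIntegrable_s7 le_rfl hs) (hz.intervalIntegrable_s7 hs hst)]
  abel

end Caratheodory

section SwitchedLinear

variable {ι : Type*} [Fintype ι] [DecidableEq ι] {A : ℝ → Matrix ι ι ℝ} {t₀ μ M s : ℝ}
  {x : ℝ → ι → ℝ}

theorem sum_abs_sub_sum_abs_le_of_isCaratheodorySol
    (hA : ∀ᵐ t, t₀ ≤ t → ∀ j, A t j j + ∑ i ∈ univ.erase j, |A t i j| ≤ μ)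
    (hM : ∀ t i j, |A t i j| ≤ M) (hx : IsCaratheodorySol (fun t v => A t *ᵥ v) t₀ x)
    {z ε : ℝ} (hs : t₀ ≤ s) (hsz : s ≤ z) (hε : ∀ τ ∈ Icc s z, ∑ i, |x τ i - x z i| ≤ ε) :
    ∑ i, |x z i| - ∑ i, |x s i| ≤ (z - s) * (μ * ∑ i, |x z i| + Fintype.card ι * M * ε) := by
  set σ : ι → ℝ := fun i => SignType.sign (x z i)
  have hσ : ∀ i, |σ i| ≤ 1 := fun i => abs_sign_le_one _
  let L : (ι → ℝ) →L[ℝ] ℝ := LinearMap.toContinuousLinearMap (dotProductEquiv ℝ ι σ)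
  have hL : ∀ v, L v = σ ⬝ᵥ v := fun v => rfl
  have hint := hx.intervalIntegrable_s7 hs hsz
  have hcardM : 0 ≤ (Fintype.card ι : ℝ) * M := by
    rcases isEmpty_or_nonempty ι with hι | ⟨⟨i⟩⟩
    · simp
    · exact mul_nonneg (Nat.cast_nonneg _) ((abs_nonneg _).trans (hM 0 i i))
  have hbound : ∀ᵐ τ ∂volume.restrict (Icc s z),
      σ ⬝ᵥ (A τ *ᵥ x τ) ≤ μ * ∑ i, |x z i| + Fintype.card ι * M * ε := by
    filter_upwards [ae_restrict_of_ae hA, ae_restrict_mem measurableSet_Icc] with τ hAτ hτ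
    have hsplit : A τ *ᵥ x τ = A τ *ᵥ x z + A τ *ᵥ (x τ - x z) := by
      rw [← mulVec_add, add_sub_cancel]
    rw [hsplit, dotProduct_add]
    refine add_le_add (sign_dotProduct_mulVec_le (hAτ (hs.trans hτ.1)) _) ?_
    exact (dotProduct_mulVec_le_of_abs_le hσ (hM τ) _).trans <|
      mul_le_mul_of_nonneg_left (by simpa only [Pi.sub_apply] using hε τ hτ) hcardM
  calc ∑ i, |x z i| - ∑ i, |x s i| ≤ σ ⬝ᵥ (x z - x s) := by
        rw [dotProduct_sub, show σ ⬝ᵥ x z = ∑ i, |x z i| from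
          sum_congr rfl fun i _ => sign_mul_self (x z i)]
        linarith [dotProduct_le_sum_abs hσ (x s)]
    _ = ∫ τ in s..z, σ ⬝ᵥ (A τ *ᵥ x τ) := by
        rw [hx.sub_eq_integral hs hsz, ← hL]
        exact (L.intervalIntegral_comp_comm hint).symm
    _ ≤ ∫ _ in s..z, (μ * ∑ i, |x z i| + Fintype.card ι * M * ε) :=
        intervalIntegral.integral_mono_ae_restrict hsz
          ⟨L.integrable_comp hint.1, L.integrable_comp hint.2⟩
          intervalIntegrable_const hbound
    _ = (z - s) * (μ * ∑ i, |x z i| + Fintype.card ι * M * ε) := by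
        rw [intervalIntegral.integral_const, smul_eq_mul]

theorem eventually_slope_sum_abs_lt
    (hA : ∀ᵐ t, t₀ ≤ t → ∀ j, A t j j + ∑ i ∈ univ.erase j, |A t i j| ≤ μ)
    (hM : ∀ t i j, |A t i j| ≤ M) (hx : IsCaratheodorySol (fun t v => A t *ᵥ v) t₀ x)
    (hs : t₀ ≤ s) {r : ℝ} (hr : μ * ∑ i, |x s i| < r) :
    ∀ᶠ z in 𝓝[>] s, (z - s)⁻¹ * (∑ i, |x z i| - ∑ i, |x s i|) < r := by
  set V : ℝ → ℝ := fun t => ∑ i, |x t i|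
  set φ : ℝ → ℝ := fun τ => ∑ i, |x τ i - x s i|
  have hφ : Tendsto φ (𝓝[≥] s) (𝓝 0) := by
    have hxs : ContinuousWithinAt x (Ici s) s := (hx.1 s hs).mono (Ici_subset_Ici.2 hs)
    simpa [φ] using tendsto_finsetSum univ fun i _ =>
      (((continuous_apply i).continuousAt.comp_continuousWithinAt hxs).sub
        (continuousWithinAt_const (b := x s i))).abs
  set K : ℝ := |μ| + 2 * Fintype.card ι * M
  obtain ⟨ε, hεr, hε⟩ : ∃ ε, μ * V s + K * ε < r ∧ 0 < ε := by
    have : Tendsto (fun ε => μ * V s + K * ε) (𝓝[>] 0) (𝓝 (μ * V s)) := by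
      simpa using (tendsto_const_nhds.add (tendsto_id.const_mul K)).mono_left
        (nhdsWithin_le_nhds (a := (0 : ℝ)))
    exact ((this.eventually (gt_mem_nhds hr)).and self_mem_nhdsWithin).exists
  obtain ⟨u, hsu, hu⟩ := mem_nhdsGE_iff_exists_Ico_subset.1 (hφ.eventually (ge_mem_nhds hε))
  filter_upwards [Ioo_mem_nhdsGT hsu] with z ⟨hsz, hzu⟩
  have hφε : ∀ τ ∈ Icc s z, φ τ ≤ ε := fun τ hτ => hu ⟨hτ.1, hτ.2.trans_lt hzu⟩
  have hφz := hφε z ⟨hsz.le, le_rfl⟩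
  have hdist : ∀ τ ∈ Icc s z, ∑ i, |x τ i - x z i| ≤ 2 * ε := fun τ hτ =>
    calc ∑ i, |x τ i - x z i| ≤ φ τ + φ z := by
          rw [← sum_add_distrib]
          exact sum_le_sum fun i _ =>
            (abs_sub_le _ (x s i) _).trans_eq (by rw [abs_sub_comm (x s i)])
      _ ≤ 2 * ε := by linarith [hφε τ hτ]
  have hVz : μ * V z ≤ μ * V s + |μ| * ε :=
    calc μ * V z = μ * V s + μ * (V z - V s) := by ring
      _ ≤ μ * V s + |μ| * |V z - V s| := by
          rw [← abs_mul]; exact add_le_add_right (le_abs_self _) _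
      _ ≤ μ * V s + |μ| * ε := by
          gcongr; exact (abs_sum_abs_sub_sum_abs_le _ _).trans hφz
  rw [inv_mul_lt_iff₀ (sub_pos.2 hsz)]
  calc V z - V s ≤ (z - s) * (μ * V z + Fintype.card ι * M * (2 * ε)) :=
        sum_abs_sub_sum_abs_le_of_isCaratheodorySol hA hM hx hs hsz.le hdist
    _ < (z - s) * r := mul_lt_mul_of_pos_left (by linarith) (sub_pos.2 hsz)

end SwitchedLinear

theorem switched_linear_stability_mu1_general
    {n : ℕ}
    (A : ℝ → Matrix (Fin n) (Fin n) ℝ)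
    (hbdd : ∃ M : ℝ, ∀ t i j, |A t i j| ≤ M)
    (t₀ c : ℝ)
    (hμ : ∀ᵐ t ∂(volume : Measure ℝ), t₀ ≤ t → ∀ j : Fin n,
      A t j j + ∑ i ∈ Finset.univ.erase j, |A t i j| ≤ -c)
    (x : ℝ → Fin n → ℝ)
    (hx : IsCaratheodorySol (fun t z => (A t).mulVec z) t₀ x) :
    ∀ t, t₀ ≤ t → ∑ i, |x t i| ≤ Real.exp (-c * (t - t₀)) * ∑ i, |x t₀ i| := by
  obtain ⟨M, hM⟩ := hbdd
  intro t ht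
  have hV : ContinuousOn (fun s => ∑ i, |x s i|) (Icc t₀ t) :=
    continuousOn_finsetSum _ fun i _ =>
      ((continuous_apply i).comp_continuousOn (hx.1.mono Icc_subset_Ici_self)).abs
  have := le_gronwallBound_of_liminf_deriv_right_le (K := -c) (ε := 0) hV
    (fun s hs r hr => (eventually_slope_sum_abs_lt hμ hM hx hs.1 hr).frequently) le_rfl
    (fun _ _ => by simp) t ⟨ht, le_rfl⟩
  rwa [gronwallBound_ε0, mul_comm] at this

/-- Stability of arbitrarily switched linear systems (`ℓ¹` matrix measure):
if the measurable bounded matrix function `A(t)` has `ℓ¹`-matrix measure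
`μ₁(A(t)) = max_j (A(t)_{jj} + Σ_{i ≠ j} |A(t)_{ij}|) ≤ -c` for a.e. `t ≥ t₀`,
then every Caratheodory solution of `ẋ = A(t) x` decays exponentially to the
origin in the `ℓ¹` norm with rate `c`. -/
theorem switched_linear_stability_mu1
    {n : ℕ}
    (A : ℝ → Matrix (Fin n) (Fin n) ℝ)
    (hmeas : ∀ i j, Measurable fun t => A t i j)
    (hbdd : ∃ M : ℝ, ∀ t i j, |A t i j| ≤ M)
    (t₀ c : ℝ) (hc : 0 < c)
    (hμ : ∀ᵐ t ∂(volume : Measure ℝ), t₀ ≤ t → ∀ j : Fin n,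
      A t j j + ∑ i ∈ Finset.univ.erase j, |A t i j| ≤ -c)
    (x : ℝ → Fin n → ℝ)
    (hx : IsCaratheodorySol (fun t z => (A t).mulVec z) t₀ x) :
    ∀ t, t₀ ≤ t → ∑ i, |x t i| ≤ Real.exp (-c * (t - t₀)) * ∑ i, |x t₀ i| :=
  switched_linear_stability_mu1_general A hbdd t₀ c hμ x hx
end
end

section
/- A subset C of ℝⁿ is convex if and only if it is 1-reachable, i.e., if and only if for any two points x₀, y₀ ∈ C there exists a continuously differentiable curve γ : [0,1] → C with γ(0) = x₀, γ(1) = y₀, and ‖γ'(r)‖ ≤ ‖y₀ − x₀‖ for all r ∈ [0,1]. -/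
/-!
A curve from `x` to `y` of speed at most `‖y - x‖` on `[0, 1]` is `‖y - x‖`-Lipschitz, so its
point at time `t` is within `t‖y - x‖` of `x` and within `(1 - t)‖y - x‖` of `y`. By the triangle
inequality both bounds are equalities, and in a strictly convex space (such as `ℝⁿ`) this pins the
point down as `x + t (y - x)`: the curve is the segment itself, which therefore lies in `C`.
-/

noncomputable section

open Set AffineMap

variable {E : Type*} [NormedAddCommGroup E] [NormedSpace ℝ E]

theorem Convex.kReachable_one {C : Set E} (hC : Convex ℝ C) : KReachable 1 C := by
  intro x hx y hy
  refine ⟨lineMap x y, (contDiff_lineMap x y).contDiffOn, fun r hr ↦ hC.lineMap_mem hx hy hr,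
    lineMap_apply_zero x y, lineMap_apply_one x y, fun r hr ↦ ?_⟩
  rw [hasDerivWithinAt_lineMap.derivWithin (uniqueDiffOn_Icc one_pos r hr), one_mul]

section StrictConvex

variable [StrictConvexSpace ℝ E]

theorem eq_lineMap_of_dist_le_mul_of_dist_le_mul {x y z : E} {r : ℝ}
    (hxy : dist x y ≤ r * dist x z) (hyz : dist y z ≤ (1 - r) * dist x z) :
    y = lineMap x z r := by
  have htri := dist_triangle x y z
  exact eq_lineMap_of_dist_eq_mul_of_dist_eq_mul (by linarith) (by linarith)

theorem eq_lineMap_of_norm_derivWithin_le {γ : ℝ → E} (hγ : DifferentiableOn ℝ γ (Icc 0 1))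
    (hspeed : ∀ r ∈ Icc (0 : ℝ) 1, ‖derivWithin γ (Icc 0 1) r‖ ≤ ‖γ 1 - γ 0‖)
    {t : ℝ} (ht : t ∈ Icc 0 1) : γ t = lineMap (γ 0) (γ 1) t := by
  have hlip : ∀ s ∈ Icc (0 : ℝ) 1, ∀ u ∈ Icc (0 : ℝ) 1,
      dist (γ s) (γ u) ≤ |u - s| * dist (γ 0) (γ 1) := fun s hs u hu ↦ by
    rw [dist_eq_norm' (γ s), dist_comm (γ 0), dist_eq_norm (γ 1), mul_comm, ← Real.norm_eq_abs]
    exact (convex_Icc 0 1).norm_image_sub_le_of_norm_derivWithin_le hγ hspeed hs hu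
  have h0 := hlip 0 (left_mem_Icc.2 zero_le_one) t ht
  have h1 := hlip t ht 1 (right_mem_Icc.2 zero_le_one)
  rw [sub_zero, abs_of_nonneg ht.1] at h0
  rw [abs_of_nonneg (sub_nonneg.2 ht.2)] at h1
  exact eq_lineMap_of_dist_le_mul_of_dist_le_mul h0 h1

theorem KReachable.convex {C : Set E} (hC : KReachable 1 C) : Convex ℝ C := by
  refine convex_iff_segment_subset.2 fun x hx y hy ↦ ?_
  rw [segment_eq_image_lineMap]
  rintro _ ⟨t, ht, rfl⟩
  obtain ⟨γ, hγ, hγC, rfl, rfl, hspeed⟩ := hC x hx y hy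
  simp only [one_mul] at hspeed
  rw [← eq_lineMap_of_norm_derivWithin_le (hγ.differentiableOn one_ne_zero) hspeed ht]
  exact hγC t ht

end StrictConvex

/-- A subset of `ℝⁿ` is convex if and only if it is `1`-reachable. -/
theorem convex_iff_one_reachable
    {n : ℕ} (C : Set (EuclideanSpace ℝ (Fin n))) :
    Convex ℝ C ↔ KReachable 1 C :=
  ⟨Convex.kReachable_one, KReachable.convex⟩
end
end

section
/- (Incremental stability of the switched transcriptional module.) Fix positive parameters k₁, k₂, δ, β, h, e_T, X_tot and a continuous input u : ℝ → ℝ with u(t) ≥ u_min > 0 for all t. Consider the planar switched system in the variables (x_t, y): ẋ_t = u(t)(X_tot − x_t) − δ x_t + δ y + ṽ(x_t, y), ẏ = −k₁ y + k₂ (e_T − y)(x_t − y), where ṽ(x_t, y) = 0 if x_t − y ≤ h and ṽ(x_t, y) = −β (x_t − y − h) if x_t − y > h. Let D := { (x_t, y) ∈ ℝ² : y ≤ e_T and y ≤ x_t } (a convex set) and set c := min(u_min, k₁). Then for any two Caratheodory solutions z₁ = (x_{t,1}, y₁) and z₂ = (x_{t,2}, y₂) that remain in D on [t₀, t], one has ‖z₁(t)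 − z₂(t)‖_∞ ≤ e^{−c(t−t₀)} ‖z₁(t₀) − z₂(t₀)‖_∞, where ‖(a,b)‖_∞ = max(|a|, |b|); i.e., the switched system is incrementally exponentially stable on D. -/
open MeasureTheory

noncomputable section

/-! On `D` the increment of the vector field between two states is `J (z - z')` for a matrix `J`
(a secant Jacobian) whose off-diagonal entries are nonnegative and whose row sums are at most
`-c`, so its logarithmic sup norm `μ_∞(J) = max_i (J_ii + Σ_{j ≠ i} |J_ij|)` is at most `-c`.
The switching term enters `J` only through a secant slope of the nonincreasing function `ṽ`,
which is why both modes and the switching boundary are covered at once. A bound `μ_∞(J) ≤ -c`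
means that the Euler step contracts, `‖w + h J w‖ ≤ (1 - c h) ‖w‖` for small `h > 0`, hence the
right Dini derivative of `‖z₁ - z₂‖` is at most `-c ‖z₁ - z₂‖`, and Grönwall's inequality gives
the exponential bound. The vector field is continuous, so Caratheodory solutions are `C¹`. -/

open Filter Topology Set Real

lemma IsCaratheodorySol.hasDerivWithinAt_Icc {E : Type*} [NormedAddCommGroup E]
    [NormedSpace ℝ E] [CompleteSpace E] {g : ℝ → E → E} {t₀ T x : ℝ} {z : ℝ → E}
    (hz : IsCaratheodorySol g t₀ z) (hg : ContinuousOn (fun τ => g τ (z τ)) (Icc t₀ T))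
    (hx : x ∈ Icc t₀ T) : HasDerivWithinAt z (g x (z x)) (Icc t₀ T) x := by
  have : Fact (x ∈ Icc t₀ T) := ⟨hx⟩
  have hFTC := intervalIntegral.integral_hasDerivWithinAt_right (s := Icc t₀ T) (hz.2 x hx.1).1
    (hg.stronglyMeasurableAtFilter_nhdsWithin measurableSet_Icc x) (hg x hx)
  exact (hFTC.const_add (z t₀)).congr (fun s hs => (hz.2 s hs.1).2) (hz.2 x hx.1).2

lemma tendsto_sub_nhdsGT_zero (x : ℝ) : Tendsto (fun z => z - x) (𝓝[>] x) (𝓝[>] 0) :=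
  tendsto_nhdsWithin_iff.2
    ⟨((continuous_sub_right x).tendsto' x 0 (sub_self x)).mono_left nhdsWithin_le_nhds,
      eventually_nhdsWithin_of_forall fun _ hz => mem_Ioi.2 (sub_pos.2 hz)⟩

section EulerStep

variable {E : Type*} [NormedAddCommGroup E] [NormedSpace ℝ E]

lemma eventually_slope_norm_lt_of_norm_add_smul_le {w : ℝ → E} {v : E} {x c r : ℝ}
    (hw : HasDerivWithinAt w v (Ioi x) x)
    (hstep : ∀ᶠ h in 𝓝[>] 0, ‖w x + h • v‖ ≤ (1 - c * h) * ‖w x‖) (hr : -c * ‖w x‖ < r) :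
    ∀ᶠ z in 𝓝[>] x, (z - x)⁻¹ * (‖w z‖ - ‖w x‖) < r := by
  obtain ⟨ε, hε, hεr⟩ : ∃ ε, 0 < ε ∧ -c * ‖w x‖ + ε < r :=
    ⟨(r + c * ‖w x‖) / 2, by linarith, by linarith⟩
  filter_upwards [hw.isLittleO.bound hε, (tendsto_sub_nhdsGT_zero x).eventually hstep,
    self_mem_nhdsWithin] with z hrem hlin (hz : x < z)
  have hzx : 0 < z - x := sub_pos.2 hz
  rw [Real.norm_eq_abs, abs_of_pos hzx] at hrem
  have hwz : ‖w z‖ ≤ (1 - c * (z - x)) * ‖w x‖ + ε * (z - x) :=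
    calc ‖w z‖ = ‖(w x + (z - x) • v) + (w z - w x - (z - x) • v)‖ := by
          rw [add_add_sub_cancel, add_sub_cancel]
      _ ≤ _ := (norm_add_le _ _).trans (add_le_add hlin hrem)
  rw [inv_mul_lt_iff₀ hzx]
  nlinarith

theorem norm_le_exp_mul_of_norm_add_smul_le {w w' : ℝ → E} {a b c : ℝ}
    (hw : ContinuousOn w (Icc a b))
    (hw' : ∀ x ∈ Ico a b, HasDerivWithinAt w (w' x) (Ici x) x)
    (hstep : ∀ x ∈ Ico a b, ∀ᶠ h in 𝓝[>] 0, ‖w x + h • w' x‖ ≤ (1 - c * h) * ‖w x‖) :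
    ∀ x ∈ Icc a b, ‖w x‖ ≤ exp (-c * (x - a)) * ‖w a‖ := by
  intro x hx
  have := le_gronwallBound_of_liminf_deriv_right_le (f' := fun x => -c * ‖w x‖) (ε := 0)
    hw.norm (fun x hx r hr => (eventually_slope_norm_lt_of_norm_add_smul_le
      ((hw' x hx).mono Ioi_subset_Ici_self) (hstep x hx) hr).frequently)
    le_rfl (fun x _ => (add_zero _).ge) x hx
  rwa [gronwallBound_ε0, mul_comm] at this

end EulerStep

lemma abs_add_mul_le_of_add_abs_le {p q a b c h : ℝ} (hh : 0 ≤ h) (ha : 0 ≤ 1 + h * a)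
    (hab : a + |b| ≤ -c) : |p + h * (a * p + b * q)| ≤ (1 - c * h) * max |p| |q| := by
  have hp : |p| ≤ max |p| |q| := le_max_left _ _
  have hq : |q| ≤ max |p| |q| := le_max_right _ _
  calc |p + h * (a * p + b * q)| = |(1 + h * a) * p + h * b * q| := by
        congr 1; ring
    _ ≤ (1 + h * a) * |p| + h * |b| * |q| := by
        grw [abs_add_le, abs_mul, abs_mul, abs_mul, abs_of_nonneg ha, abs_of_nonneg hh]
    _ ≤ (1 + h * a) * max |p| |q| + h * |b| * max |p| |q| := by gcongr
    _ = (1 + h * (a + |b|)) * max |p| |q| := by ring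
    _ ≤ (1 - c * h) * max |p| |q| := by gcongr; nlinarith

lemma Prod.eventually_norm_add_smul_le {v G : ℝ × ℝ} {a₁ b₁ a₂ b₂ c : ℝ}
    (hG₁ : G.1 = a₁ * v.1 + b₁ * v.2) (hG₂ : G.2 = a₂ * v.2 + b₂ * v.1)
    (h₁ : a₁ + |b₁| ≤ -c) (h₂ : a₂ + |b₂| ≤ -c) :
    ∀ᶠ h in 𝓝[>] (0 : ℝ), ‖v + h • G‖ ≤ (1 - c * h) * ‖v‖ := by
  have hsmall (a : ℝ) : ∀ᶠ h in 𝓝[>] (0 : ℝ), 0 ≤ 1 + h * a :=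
    nhdsWithin_le_nhds <| ((continuous_const.add (continuous_id.mul continuous_const)).tendsto' 0 1
      (by simp)).eventually (eventually_ge_nhds zero_lt_one)
  filter_upwards [hsmall a₁, hsmall a₂, self_mem_nhdsWithin] with h ha₁ ha₂ (hh : 0 < h)
  simp only [Prod.norm_def, Prod.fst_add, Prod.snd_add, Prod.smul_fst, Prod.smul_snd, smul_eq_mul,
    Real.norm_eq_abs, hG₁, hG₂]
  refine max_le (abs_add_mul_le_of_add_abs_le hh.le ha₁ h₁) ?_
  rw [max_comm]
  exact abs_add_mul_le_of_add_abs_le hh.le ha₂ h₂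

/-- `ṽ(x_t, y) = switchingTerm β hth (x_t - y)`. -/
def switchingTerm (β hth d : ℝ) : ℝ := if d ≤ hth then 0 else -β * (d - hth)

@[fun_prop]
lemma continuous_switchingTerm (β hth : ℝ) : Continuous (switchingTerm β hth) :=
  Continuous.if_le continuous_const (by fun_prop) continuous_id continuous_const
    fun d hd => by simp [hd]

lemma antitone_switchingTerm {β : ℝ} (hβ : 0 ≤ β) (hth : ℝ) : Antitone (switchingTerm β hth) := by
  intro d d' hdd'
  unfold switchingTerm
  split_ifs <;> nlinarith

def transcriptionalField (k₁ k₂ δ β hth eT Xtot : ℝ) (u : ℝ → ℝ) (t : ℝ) (z : ℝ × ℝ) : ℝ × ℝ :=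
  (u t * (Xtot - z.1) - δ * z.1 + δ * z.2 + switchingTerm β hth (z.1 - z.2),
    -k₁ * z.2 + k₂ * (eT - z.2) * (z.1 - z.2))

section TranscriptionalField

variable {k₁ k₂ δ β hth eT Xtot : ℝ} {u : ℝ → ℝ}

lemma ContinuousOn.transcriptionalField {z : ℝ → ℝ × ℝ} {s : Set ℝ} (hu : Continuous u)
    (hz : ContinuousOn z s) :
    ContinuousOn (fun τ => transcriptionalField k₁ k₂ δ β hth eT Xtot u τ (z τ)) s := by
  unfold _root_.transcriptionalField
  fun_prop

lemma transcriptionalField_eventually_norm_add_smul_le (hk₂ : 0 ≤ k₂) (hδ : 0 ≤ δ) (hβ : 0 ≤ β)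
    {t umin : ℝ} (hu : umin ≤ u t) {z z' : ℝ × ℝ} (hz : z.2 ≤ eT) (hz' : z'.2 ≤ z'.1) :
    ∀ᶠ h in 𝓝[>] 0, ‖(z - z') + h • (transcriptionalField k₁ k₂ δ β hth eT Xtot u t z -
      transcriptionalField k₁ k₂ δ β hth eT Xtot u t z')‖ ≤ (1 - min umin k₁ * h) * ‖z - z'‖ := by
  set s := slope (switchingTerm β hth) (z'.1 - z'.2) (z.1 - z.2)
  have hs : s ≤ 0 := ((antitone_switchingTerm hβ hth).antitoneOn univ).slope_nonpos trivial trivial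
  have hψ := sub_smul_slope (switchingTerm β hth) (z'.1 - z'.2) (z.1 - z.2)
  rw [vsub_eq_sub, smul_eq_mul] at hψ
  have hb₂ : 0 ≤ k₂ * (eT - z.2) := mul_nonneg hk₂ (by linarith)
  have hk₂z' : 0 ≤ k₂ * (z'.1 - z'.2) := mul_nonneg hk₂ (by linarith)
  refine Prod.eventually_norm_add_smul_le (a₁ := -(u t + δ) + s) (b₁ := δ - s)
    (a₂ := -k₁ - k₂ * (eT - z.2) - k₂ * (z'.1 - z'.2)) (b₂ := k₂ * (eT - z.2)) ?_ ?_ ?_ ?_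
  · simp only [transcriptionalField, Prod.fst_sub, Prod.snd_sub]
    linear_combination -hψ
  · simp only [transcriptionalField, Prod.fst_sub, Prod.snd_sub]
    ring
  · rw [abs_of_nonneg (by linarith)]
    linarith [min_le_left umin k₁]
  · rw [abs_of_nonneg hb₂]
    linarith [min_le_right umin k₁]

end TranscriptionalField

theorem transcriptional_module_incremental_stability_general
    (k₁ k₂ δ β hth eT Xtot : ℝ)
    (hk₂ : 0 < k₂) (hδ : 0 < δ) (hβ : 0 < β)
    (u : ℝ → ℝ) (hu_cont : Continuous u)
    (umin : ℝ) (hu : ∀ t, umin ≤ u t)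
    (t₀ : ℝ) (z₁ z₂ : ℝ → ℝ × ℝ)
    (hz₁ : IsCaratheodorySol
      (fun t z =>
        (u t * (Xtot - z.1) - δ * z.1 + δ * z.2 +
            (if z.1 - z.2 ≤ hth then 0 else -β * (z.1 - z.2 - hth)),
          -k₁ * z.2 + k₂ * (eT - z.2) * (z.1 - z.2)))
      t₀ z₁)
    (hz₂ : IsCaratheodorySol
      (fun t z =>
        (u t * (Xtot - z.1) - δ * z.1 + δ * z.2 +
            (if z.1 - z.2 ≤ hth then 0 else -β * (z.1 - z.2 - hth)),
          -k₁ * z.2 + k₂ * (eT - z.2) * (z.1 - z.2)))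
      t₀ z₂)
    (t : ℝ) (ht : t₀ ≤ t)
    (hD₁ : ∀ s ∈ Set.Icc t₀ t, (z₁ s).2 ≤ eT ∧ (z₁ s).2 ≤ (z₁ s).1)
    (hD₂ : ∀ s ∈ Set.Icc t₀ t, (z₂ s).2 ≤ eT ∧ (z₂ s).2 ≤ (z₂ s).1) :
    ‖z₁ t - z₂ t‖ ≤ Real.exp (-(min umin k₁) * (t - t₀)) * ‖z₁ t₀ - z₂ t₀‖ := by
  set F := transcriptionalField k₁ k₂ δ β hth eT Xtot u
  have hderiv {z : ℝ → ℝ × ℝ} (hz : IsCaratheodorySol F t₀ z) {x : ℝ} (hx : x ∈ Icc t₀ t) :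
      HasDerivWithinAt z (F x (z x)) (Icc t₀ t) x :=
    hz.hasDerivWithinAt_Icc ((hz.1.mono Icc_subset_Ici_self).transcriptionalField hu_cont) hx
  refine norm_le_exp_mul_of_norm_add_smul_le (w := z₁ - z₂)
    (w' := fun x => F x (z₁ x) - F x (z₂ x)) ((hz₁.1.sub hz₂.1).mono Icc_subset_Ici_self)
    (fun x hx => ?_) (fun x hx => ?_) t ⟨ht, le_rfl⟩
  · exact ((hderiv hz₁ (Ico_subset_Icc_self hx)).sub (hderiv hz₂ (Ico_subset_Icc_self hx)))
      |>.mono_of_mem_nhdsWithin (Icc_mem_nhdsGE_of_mem hx)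
  · exact transcriptionalField_eventually_norm_add_smul_le hk₂.le hδ.le hβ.le (hu x)
      (hD₁ x (Ico_subset_Icc_self hx)).1 (hD₂ x (Ico_subset_Icc_self hx)).2

/-- Incremental exponential stability of the switched transcriptional module.
The state is `z = (x_t, y)`; the norm on `ℝ × ℝ` is the sup norm
`‖(a, b)‖ = max (|a|, |b|)`.  Any two Caratheodory solutions that remain in
the convex region `D = {(x_t, y) : y ≤ e_T ∧ y ≤ x_t}` approach each other
exponentially with rate `c = min u_min k₁`. -/
theorem transcriptional_module_incremental_stability
    (k₁ k₂ δ β hth eT Xtot : ℝ)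
    (hk₁ : 0 < k₁) (hk₂ : 0 < k₂) (hδ : 0 < δ) (hβ : 0 < β)
    (hhth : 0 < hth) (heT : 0 < eT) (hXtot : 0 < Xtot)
    (u : ℝ → ℝ) (hu_cont : Continuous u)
    (umin : ℝ) (humin : 0 < umin) (hu : ∀ t, umin ≤ u t)
    (t₀ : ℝ) (z₁ z₂ : ℝ → ℝ × ℝ)
    (hz₁ : IsCaratheodorySol
      (fun t z =>
        (u t * (Xtot - z.1) - δ * z.1 + δ * z.2 +
            (if z.1 - z.2 ≤ hth then 0 else -β * (z.1 - z.2 - hth)),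
          -k₁ * z.2 + k₂ * (eT - z.2) * (z.1 - z.2)))
      t₀ z₁)
    (hz₂ : IsCaratheodorySol
      (fun t z =>
        (u t * (Xtot - z.1) - δ * z.1 + δ * z.2 +
            (if z.1 - z.2 ≤ hth then 0 else -β * (z.1 - z.2 - hth)),
          -k₁ * z.2 + k₂ * (eT - z.2) * (z.1 - z.2)))
      t₀ z₂)
    (t : ℝ) (ht : t₀ ≤ t)
    (hD₁ : ∀ s ∈ Set.Icc t₀ t, (z₁ s).2 ≤ eT ∧ (z₁ s).2 ≤ (z₁ s).1)
    (hD₂ : ∀ s ∈ Set.Icc t₀ t, (z₂ s).2 ≤ eT ∧ (z₂ s).2 ≤ (z₂ s).1) :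
    ‖z₁ t - z₂ t‖ ≤ Real.exp (-(min umin k₁) * (t - t₀)) * ‖z₁ t₀ - z₂ t₀‖ :=
  transcriptional_module_incremental_stability_general k₁ k₂ δ β hth eT Xtot hk₂ hδ hβ u hu_cont
    umin hu t₀ z₁ z₂ hz₁ hz₂ t ht hD₁ hD₂
end
end
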